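/- Consider the stochastic KM iteration x_{k+1} = (1−α)x_k + α(R(θ)x_k + ω_k) with constant step α ∈ (0,1), θ ∈ (0,2π), where the noise ω_k satisfies E[ω_k | F_k] = 0 and E[‖ω_k‖₂² | F_k] ≤ A + B‖x_k‖₂² with A > 0, 0 ≤ B < (1−μ)/α², and μ = 1 − 2α + 2α² + 2α(1−α)cos θ. Then E[‖x_k‖₂²] ≤ (μ + α²B)^{k−1} ‖x₁‖₂² + Aα² · (1 − (μ+α²B)^{k−1}) / (1 − (μ+α²B)). -/

import Mathlib

open Real MeasureTheory
open scoped RealInnerProductSpace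

noncomputable def R (θ : ℝ) : Matrix (Fin 2) (Fin 2) ℝ :=
  !![Real.cos θ, -Real.sin θ; Real.sin θ, Real.cos θ]

lemma coord_abs_le_norm (v : EuclideanSpace ℝ (Fin 2)) (i : Fin 2) : |v i| ≤ ‖v‖ := by
  have h := EuclideanSpace.norm_eq v
  rw [h, Fin.sum_univ_two]
  have h0 : (0:ℝ) ≤ ‖v 0‖^2 := by positivity
  have h1 : (0:ℝ) ≤ ‖v 1‖^2 := by positivity
  fin_cases i <;> simp only [Real.norm_eq_abs] at * <;>
    [ (calc |v 0| = Real.sqrt (|v 0|^2) := by rw [Real.sqrt_sq_eq_abs, abs_abs]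
        _ ≤ _ := Real.sqrt_le_sqrt (by nlinarith));
      (calc |v 1| = Real.sqrt (|v 1|^2) := by rw [Real.sqrt_sq_eq_abs, abs_abs]
        _ ≤ _ := Real.sqrt_le_sqrt (by nlinarith))]

lemma norm_P_sq (α θ : ℝ) (v : EuclideanSpace ℝ (Fin 2)) :
    ‖(1 - α) • v + α • ((WithLp.equiv 2 (Fin 2 → ℝ)).symm ((R θ).mulVec v))‖ ^ 2
      = (1 - 2*α + 2*α^2 + 2*α*(1-α)*Real.cos θ) * ‖v‖^2 := by
  rw [← real_inner_self_eq_norm_sq, ← real_inner_self_eq_norm_sq]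
  simp only [PiLp.inner_apply, RCLike.inner_apply, conj_trivial, Fin.sum_univ_two,
    PiLp.add_apply, PiLp.smul_apply, smul_eq_mul, WithLp.equiv_symm_apply, PiLp.toLp_apply, R,
    Matrix.mulVec, dotProduct, Matrix.cons_val', Matrix.cons_val_zero,
    Matrix.cons_val_one, Matrix.head_cons, Matrix.empty_val', Matrix.cons_val_fin_one,
    Matrix.head_fin_const, Matrix.of_apply]
  have h := Real.sin_sq_add_cos_sq θ
  linear_combination (α^2 * (v 0 * v 0 + v 1 * v 1)) * h

lemma T_continuous (θ : ℝ) :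
    Continuous fun v : EuclideanSpace ℝ (Fin 2) =>
      (WithLp.equiv 2 (Fin 2 → ℝ)).symm ((R θ).mulVec v) := by
  have hcoord : ∀ j : Fin 2, Continuous fun v : EuclideanSpace ℝ (Fin 2) => v j :=
    fun j => (continuous_apply j).comp (PiLp.continuous_ofLp 2 (fun _ : Fin 2 => ℝ))
  refine (PiLp.continuous_toLp 2 (fun _ : Fin 2 => ℝ)).comp ?_
  refine continuous_pi fun i => ?_
  simp only [Matrix.mulVec, dotProduct, Fin.sum_univ_two]
  exact ((continuous_const.mul (hcoord 0)).add (continuous_const.mul (hcoord 1)))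

theorem stochastic_km_finite_sample_bound
    {Ω : Type*} [m0 : MeasurableSpace Ω] (μ : Measure Ω) [IsProbabilityMeasure μ]
    (F : ℕ → MeasurableSpace Ω) (hF : ∀ k, F k ≤ m0)
    (α θ A B : ℝ) (hα : α ∈ Set.Ioo (0 : ℝ) 1) (hθ : θ ∈ Set.Ioo 0 (2 * π))
    (hA : 0 < A)
    (hB : 0 ≤ B ∧ B < (1 - (1 - 2 * α + 2 * α ^ 2 + 2 * α * (1 - α) * Real.cos θ)) / α ^ 2)
    (x w : ℕ → Ω → EuclideanSpace ℝ (Fin 2))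
    (hrec : ∀ k a, x (k + 1) a = (1 - α) • x k a +
      α • ((WithLp.equiv 2 (Fin 2 → ℝ)).symm ((R θ).mulVec (x k a)) + w k a))
    (hxint : ∀ k, Integrable (fun a => ‖x k a‖ ^ 2) μ)
    (hwint : ∀ k, Integrable (fun a => ‖w k a‖ ^ 2) μ)
    (hadapted : ∀ k, StronglyMeasurable[F k] (x k))
    (hmean : ∀ k, μ[w k | F k] =ᵐ[μ] 0)
    (hvar : ∀ k, μ[(fun a => ‖w k a‖ ^ 2) | F k] ≤ᵐ[μ]
      fun a => A + B * ‖x k a‖ ^ 2) :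
    ∀ k : ℕ, 1 ≤ k →
      ∫ a, ‖x k a‖ ^ 2 ∂μ ≤
        ((1 - 2 * α + 2 * α ^ 2 + 2 * α * (1 - α) * Real.cos θ) + α ^ 2 * B) ^ (k - 1) *
            ∫ a, ‖x 1 a‖ ^ 2 ∂μ +
          A * α ^ 2 *
            (1 - ((1 - 2 * α + 2 * α ^ 2 + 2 * α * (1 - α) * Real.cos θ) + α ^ 2 * B) ^ (k - 1)) /
            (1 - ((1 - 2 * α + 2 * α ^ 2 + 2 * α * (1 - α) * Real.cos θ) + α ^ 2 * B)) := by
  obtain ⟨hα0, hα1⟩ := hα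
  have hαne : α ≠ 0 := ne_of_gt hα0
  set M : ℝ := 1 - 2 * α + 2 * α ^ 2 + 2 * α * (1 - α) * Real.cos θ with hM
  set C : ℝ := M + α ^ 2 * B with hC
  have hM0 : 0 ≤ M := by
    have hcos := Real.neg_one_le_cos θ
    nlinarith [sq_nonneg (1 - 2*α), mul_nonneg (mul_nonneg (le_of_lt hα0)
      (by linarith : (0:ℝ) ≤ 1 - α)) (by linarith : (0:ℝ) ≤ 1 + Real.cos θ)]
  have hC0 : 0 ≤ C := by
    have : 0 ≤ α ^ 2 * B := mul_nonneg (sq_nonneg α) hB.1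
    rw [hC]; linarith
  have hC1 : C < 1 := by
    have h2 := (lt_div_iff₀ (by positivity : (0:ℝ) < α ^ 2)).mp hB.2
    rw [hC]; linarith
  have h1C : 0 < 1 - C := by linarith
  -- measurability
  have hxm : ∀ k, StronglyMeasurable (x k) := fun k => (hadapted k).mono (hF k)
  have hTc := T_continuous θ
  have hPc : Continuous fun v : EuclideanSpace ℝ (Fin 2) =>
      (1 - α) • v + α • (WithLp.equiv 2 (Fin 2 → ℝ)).symm ((R θ).mulVec v) :=
    (continuous_id.const_smul (1-α)).add (hTc.const_smul α)
  have hwm : ∀ k, StronglyMeasurable (w k) := by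
    intro k
    have hw_eq : w k = fun a => α⁻¹ • (x (k+1) a - (1 - α) • x k a)
        - (WithLp.equiv 2 (Fin 2 → ℝ)).symm ((R θ).mulVec (x k a)) := by
      funext a
      rw [hrec k a, add_sub_cancel_left, smul_smul, inv_mul_cancel₀ hαne, one_smul,
        add_sub_cancel_left]
    rw [hw_eq]
    exact (((hxm (k+1)).sub ((hxm k).const_smul (1-α))).const_smul α⁻¹).sub
      (hTc.comp_stronglyMeasurable (hxm k))
  have hwb_int : ∀ k, Integrable (fun a => (1 + ‖w k a‖ ^ 2) / 2) μ := by
    intro k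
    have := ((integrable_const (1:ℝ)).add (hwint k)).div_const 2
    simpa using this
  have hw1int : ∀ k, Integrable (w k) μ := by
    intro k
    refine Integrable.mono' (hwb_int k)
      (hwm k).aestronglyMeasurable (Filter.Eventually.of_forall fun a => ?_)
    have := norm_nonneg (w k a)
    nlinarith [sq_nonneg (‖w k a‖ - 1)]
  have hcoordm : ∀ i : Fin 2, Continuous fun v : EuclideanSpace ℝ (Fin 2) => v i :=
    fun i => (continuous_apply i).comp (PiLp.continuous_ofLp 2 (fun _ : Fin 2 => ℝ))
  -- one-step bound
  have hstep : ∀ k, ∫ a, ‖x (k+1) a‖ ^ 2 ∂μ ≤ C * ∫ a, ‖x k a‖ ^ 2 ∂μ + A * α ^ 2 := by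
    intro k
    set g : Ω → EuclideanSpace ℝ (Fin 2) := fun a =>
      (1 - α) • x k a + α • (WithLp.equiv 2 (Fin 2 → ℝ)).symm ((R θ).mulVec (x k a)) with hgdef
    have hgFm : StronglyMeasurable[F k] g := hPc.comp_stronglyMeasurable (hadapted k)
    have hgm0 : StronglyMeasurable g := hgFm.mono (hF k)
    have hgnorm : ∀ a, ‖g a‖ ^ 2 = M * ‖x k a‖ ^ 2 := fun a => norm_P_sq α θ (x k a)
    have hxk1 : ∀ a, x (k+1) a = g a + α • w k a := by
      intro a; rw [hrec k a, smul_add, ← add_assoc]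
    have hnorm : ∀ a, ‖x (k+1) a‖ ^ 2
        = M * ‖x k a‖ ^ 2 + 2 * α * ⟪g a, w k a⟫ + α ^ 2 * ‖w k a‖ ^ 2 := by
      intro a
      rw [hxk1 a, norm_add_sq_real, hgnorm a, real_inner_smul_right, norm_smul,
        Real.norm_eq_abs, mul_pow, sq_abs]
      ring
    have hbound_int : Integrable (fun a => (M * ‖x k a‖ ^ 2 + ‖w k a‖ ^ 2) / 2) μ :=
      (((hxint k).const_mul M).add (hwint k)).div_const 2
    have habs : ∀ a : Ω, ∀ r : ℝ, |r| ≤ ‖g a‖ * ‖w k a‖ →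
        ‖r‖ ≤ (M * ‖x k a‖ ^ 2 + ‖w k a‖ ^ 2) / 2 := by
      intro a r hr
      have h2 := hgnorm a
      have h3 : ‖g a‖ * ‖w k a‖ ≤ (‖g a‖^2 + ‖w k a‖^2)/2 := by
        nlinarith [sq_nonneg (‖g a‖ - ‖w k a‖)]
      rw [Real.norm_eq_abs]
      calc |r| ≤ ‖g a‖ * ‖w k a‖ := hr
        _ ≤ (‖g a‖^2 + ‖w k a‖^2)/2 := h3
        _ = (M * ‖x k a‖ ^ 2 + ‖w k a‖ ^ 2) / 2 := by rw [h2]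
    have hInner : Integrable (fun a => ⟪g a, w k a⟫) μ := by
      refine Integrable.mono' hbound_int
        (hgm0.aestronglyMeasurable.inner (hwm k).aestronglyMeasurable)
        (Filter.Eventually.of_forall fun a => ?_)
      exact habs a _ (abs_real_inner_le_norm (g a) (w k a))
    -- the inner-product term integrates to zero
    have hzero : ∫ a, ⟪g a, w k a⟫ ∂μ = 0 := by
      have hcoordzero : ∀ i : Fin 2, ∫ a, g a i * w k a i ∂μ = 0 := by
        intro i
        have hwi_int : Integrable (fun a => w k a i) μ := by
          refine Integrable.mono' (hwb_int k)
            ((hcoordm i).comp_stronglyMeasurable (hwm k)).aestronglyMeasurable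
            (Filter.Eventually.of_forall fun a => ?_)
          have h1 := coord_abs_le_norm (w k a) i
          have h2 := norm_nonneg (w k a)
          rw [Real.norm_eq_abs]
          nlinarith [sq_nonneg (‖w k a‖ - 1)]
        have hcond0 : (0 : Ω → ℝ) =ᵐ[μ] μ[(fun a => w k a i) | F k] := by
          refine ae_eq_condExp_of_forall_setIntegral_eq (hF k) hwi_int
            (fun s _ _ => integrableOn_zero) (fun s hs hμs => ?_)
            (stronglyMeasurable_zero.aestronglyMeasurable)
          have h1 : ∫ a in s, w k a ∂μ = 0 := by
            rw [← setIntegral_condExp (hF k) (hw1int k) hs,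
              integral_congr_ae (ae_restrict_of_ae (hmean k))]
            simp
          have h2 : ∫ a in s, w k a i ∂μ = 0 := by
            have h3 := (EuclideanSpace.proj i :
              EuclideanSpace ℝ (Fin 2) →L[ℝ] ℝ).integral_comp_comm
              ((hw1int k).integrableOn (s := s))
            simp only [PiLp.proj_apply] at h3
            rw [h3, h1]
            simp
          simp [h2]
        have hgi : StronglyMeasurable[F k] (fun a => g a i) :=
          (hcoordm i).comp_stronglyMeasurable hgFm
        have hprod : Integrable ((fun a => g a i) * fun a => w k a i) μ := by
          refine Integrable.mono' hbound_int
            (((hgi.mono (hF k)).aestronglyMeasurable).mul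
              ((hcoordm i).comp_stronglyMeasurable (hwm k)).aestronglyMeasurable)
            (Filter.Eventually.of_forall fun a => ?_)
          simp only [Pi.mul_apply]
          refine habs a _ ?_
          rw [abs_mul]
          exact mul_le_mul (coord_abs_le_norm (g a) i) (coord_abs_le_norm (w k a) i)
            (abs_nonneg _) (norm_nonneg _)
        have hpull := condExp_mul_of_stronglyMeasurable_left hgi hprod hwi_int
        have hce0 : μ[(fun a => g a i) * fun a => w k a i | F k] =ᵐ[μ] 0 := by
          refine hpull.trans ?_
          filter_upwards [hcond0] with a ha
          simp [Pi.mul_apply, ← ha]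
        calc ∫ a, g a i * w k a i ∂μ
            = ∫ a, ((fun a => g a i) * fun a => w k a i) a ∂μ := by
              simp only [Pi.mul_apply]
          _ = ∫ a, (μ[(fun a => g a i) * fun a => w k a i | F k]) a ∂μ :=
              (integral_condExp (hF k)).symm
          _ = 0 := by rw [integral_congr_ae hce0]; simp
      have hin : ∀ a, ⟪g a, w k a⟫ = g a 0 * w k a 0 + g a 1 * w k a 1 := by
        intro a
        simp [PiLp.inner_apply, RCLike.inner_apply, conj_trivial, Fin.sum_univ_two]; ring
      have hprod_int : ∀ i : Fin 2, Integrable (fun a => g a i * w k a i) μ := by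
        intro i
        refine Integrable.mono' hbound_int
          ((((hcoordm i).comp_stronglyMeasurable hgm0).aestronglyMeasurable).mul
            (((hcoordm i).comp_stronglyMeasurable (hwm k)).aestronglyMeasurable))
          (Filter.Eventually.of_forall fun a => ?_)
        refine habs a _ ?_
        rw [abs_mul]
        exact mul_le_mul (coord_abs_le_norm (g a) i) (coord_abs_le_norm (w k a) i)
          (abs_nonneg _) (norm_nonneg _)
      have := integral_add (hprod_int 0) (hprod_int 1)
      calc ∫ a, ⟪g a, w k a⟫ ∂μ
          = ∫ a, (g a 0 * w k a 0 + g a 1 * w k a 1) ∂μ := by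
            exact integral_congr_ae (Filter.Eventually.of_forall hin)
        _ = (∫ a, g a 0 * w k a 0 ∂μ) + ∫ a, g a 1 * w k a 1 ∂μ :=
            integral_add (hprod_int 0) (hprod_int 1)
        _ = 0 := by rw [hcoordzero 0, hcoordzero 1]; ring
    -- the variance bound
    have hw2 : ∫ a, ‖w k a‖ ^ 2 ∂μ ≤ A + B * ∫ a, ‖x k a‖ ^ 2 ∂μ := by
      have h1 : ∫ a, ‖w k a‖ ^ 2 ∂μ
          = ∫ a, (μ[(fun a => ‖w k a‖ ^ 2) | F k]) a ∂μ := (integral_condExp (hF k)).symm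
      rw [h1]
      calc ∫ a, (μ[(fun a => ‖w k a‖ ^ 2) | F k]) a ∂μ
          ≤ ∫ a, (A + B * ‖x k a‖ ^ 2) ∂μ :=
            integral_mono_ae integrable_condExp
              ((integrable_const A).add ((hxint k).const_mul B)) (hvar k)
        _ = A + B * ∫ a, ‖x k a‖ ^ 2 ∂μ := by
            rw [integral_add (integrable_const A) ((hxint k).const_mul B),
              integral_const, integral_const_mul]
            simp
    -- put it together
    have hsplit : ∫ a, ‖x (k+1) a‖ ^ 2 ∂μ
        = M * (∫ a, ‖x k a‖ ^ 2 ∂μ) + 2 * α * (∫ a, ⟪g a, w k a⟫ ∂μ)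
          + α ^ 2 * ∫ a, ‖w k a‖ ^ 2 ∂μ := by
      have hInt1 : Integrable (fun a => M * ‖x k a‖ ^ 2) μ := (hxint k).const_mul M
      have hInt2 : Integrable (fun a => 2 * α * ⟪g a, w k a⟫) μ := hInner.const_mul (2*α)
      have hInt3 : Integrable (fun a => α ^ 2 * ‖w k a‖ ^ 2) μ := (hwint k).const_mul (α^2)
      have hInt12 : Integrable (fun a => M * ‖x k a‖ ^ 2 + 2 * α * ⟪g a, w k a⟫) μ :=
        hInt1.add hInt2
      rw [integral_congr_ae (Filter.Eventually.of_forall hnorm),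
        integral_add hInt12 hInt3, integral_add hInt1 hInt2,
        integral_const_mul, integral_const_mul, integral_const_mul]
    rw [hsplit, hzero]
    have h4 : α ^ 2 * ∫ a, ‖w k a‖ ^ 2 ∂μ ≤ α ^ 2 * (A + B * ∫ a, ‖x k a‖ ^ 2 ∂μ) :=
      mul_le_mul_of_nonneg_left hw2 (sq_nonneg α)
    rw [hC]
    ring_nf
    ring_nf at h4
    linarith
  -- induction
  intro k hk
  induction k, hk using Nat.le_induction with
  | base =>
    simp
  | succ n hn ih =>
    have h1 := hstep n
    obtain ⟨m, rfl⟩ : ∃ m, n = m + 1 := ⟨n - 1, (Nat.succ_pred_eq_of_pos hn).symm⟩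
    simp only [Nat.add_sub_cancel] at ih ⊢
    have h2 : C * ∫ a, ‖x (m+1) a‖ ^ 2 ∂μ
        ≤ C * (C ^ m * ∫ a, ‖x 1 a‖ ^ 2 ∂μ + A * α ^ 2 * (1 - C ^ m) / (1 - C)) :=
      mul_le_mul_of_nonneg_left ih hC0
    have h3 : C * (C ^ m * ∫ a, ‖x 1 a‖ ^ 2 ∂μ + A * α ^ 2 * (1 - C ^ m) / (1 - C)) + A * α ^ 2
        = C ^ (m+1) * ∫ a, ‖x 1 a‖ ^ 2 ∂μ + A * α ^ 2 * (1 - C ^ (m+1)) / (1 - C) := by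
      field_simp
      ring
    calc ∫ a, ‖x (m+1+1) a‖ ^ 2 ∂μ
        ≤ C * ∫ a, ‖x (m+1) a‖ ^ 2 ∂μ + A * α ^ 2 := h1
      _ ≤ C * (C ^ m * ∫ a, ‖x 1 a‖ ^ 2 ∂μ + A * α ^ 2 * (1 - C ^ m) / (1 - C)) + A * α ^ 2 :=
          by linarith [h2]
      _ = C ^ (m+1) * ∫ a, ‖x 1 a‖ ^ 2 ∂μ + A * α ^ 2 * (1 - C ^ (m+1)) / (1 - C) := h3
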